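/- Let m be a positive integer. If the denominator of the Bernoulli number B_{20m} equals 330, then T(5m) = {3, 11}. -/

import Mathlib

/-!
By von Staudt–Clausen, every prime `q` with `q - 1 ∣ 20m` divides the denominator `330` of
`B_{20m}`, so `q ∈ {2, 3, 5, 11}`. This rules out `3 ∣ m` (then `7 - 1 ∣ 20m`) and `11 ∣ m`
(then `23 - 1 ∣ 20m`), which is exactly what makes `3` and `11` Toda primes of `5m`; `5` never
is one, since `20m / 4 = 5m`.
-/

/-- A Toda prime of `n` is an odd prime `p` such that `p - 1` divides `4n`
and `gcd (p, 4n/(p-1)) = 1`. -/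
def IsTodaPrime (n p : ℕ) : Prop :=
  p.Prime ∧ Odd p ∧ (p - 1) ∣ 4 * n ∧ Nat.gcd p (4 * n / (p - 1)) = 1

/-- The set of Toda primes of `n`. -/
def TodaSet (n : ℕ) : Set ℕ := {p | IsTodaPrime n p}

open Finset

theorem prime_dvd_den_bernoulli {p k : ℕ} (hp : p.Prime) (hk : 0 < k) (hpk : p - 1 ∣ 2 * k) :
    p ∣ (bernoulli (2 * k)).den := by
  have : Fact p.Prime := ⟨hp⟩
  set S := {q ∈ range (2 * k + 2) | q.Prime ∧ q - 1 ∣ 2 * k}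
  obtain ⟨n, hn⟩ := Bernoulli.vonStaudt_clausen k
  have hpS : p ∈ S :=
    mem_filter.2 ⟨mem_range.2 (by have := Nat.le_of_dvd (by omega) hpk; omega), hp, hpk⟩
  rw [← add_sum_erase S _ hpS] at hn
  have hothers : Rat.padicValuation p (∑ q ∈ S.erase p, (1 : ℚ) / q) ≤ 1 := by
    refine Valuation.map_sum_le _ fun q hq => Rat.padicValuation_le_one_iff.2 ?_
    obtain ⟨hqp, hqS⟩ := mem_erase.1 hq
    have hq : q.Prime := (mem_filter.1 hqS).2.1
    rw [one_div, Rat.inv_natCast_den_of_pos hq.pos, Nat.prime_dvd_prime_iff_eq hp hq]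
    exact Ne.symm hqp
  -- B + 1/p is p-integral, 1/p is not, hence neither is B.
  have hshift : Rat.padicValuation p (bernoulli (2 * k) + 1 / p) ≤ 1 := by
    rw [show bernoulli (2 * k) + 1 / p = n - ∑ q ∈ S.erase p, (1 : ℚ) / q by
      linear_combination -hn]
    exact (Rat.padicValuation p).map_sub_le
      (Rat.padicValuation_le_one_iff.2 (by simp [hp.ne_one])) hothers
  by_contra hB
  have hinv := (Rat.padicValuation p).map_sub_le hshift (Rat.padicValuation_le_one_iff.2 hB)
  rw [add_sub_cancel_left, Rat.padicValuation_le_one_iff, one_div,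
    Rat.inv_natCast_den_of_pos hp.pos] at hinv
  exact hinv dvd_rfl

theorem isTodaPrime_iff_not_dvd {n p : ℕ} (hp : p.Prime) (hp2 : p ≠ 2) (hpn : p - 1 ∣ 4 * n) :
    IsTodaPrime n p ↔ ¬ p ∣ 4 * n / (p - 1) := by
  simp only [IsTodaPrime, hp, hp.odd_of_ne_two hp2, hpn, true_and]
  exact hp.coprime_iff_not_dvd

theorem isTodaPrime_three_iff (n : ℕ) : IsTodaPrime n 3 ↔ ¬ 3 ∣ n := by
  rw [isTodaPrime_iff_not_dvd Nat.prime_three (by norm_num) ⟨2 * n, by ring⟩,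
    show 4 * n / (3 - 1) = 2 * n by omega, Nat.Coprime.dvd_mul_left (by norm_num)]

theorem isTodaPrime_five_iff (n : ℕ) : IsTodaPrime n 5 ↔ ¬ 5 ∣ n := by
  rw [isTodaPrime_iff_not_dvd Nat.prime_five (by norm_num) ⟨n, by ring⟩,
    show 4 * n / (5 - 1) = n by omega]

theorem isTodaPrime_eleven_five_mul_iff (m : ℕ) : IsTodaPrime (5 * m) 11 ↔ ¬ 11 ∣ m := by
  rw [isTodaPrime_iff_not_dvd (by norm_num) (by norm_num) ⟨2 * m, by ring⟩,
    show 4 * (5 * m) / (11 - 1) = 2 * m by omega, Nat.Coprime.dvd_mul_left (by norm_num)]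

theorem eq_of_prime_dvd_330 {q : ℕ} (hq : q.Prime) (h : q ∣ 330) :
    q = 2 ∨ q = 3 ∨ q = 5 ∨ q = 11 := by
  rw [show (330 : ℕ) = 2 * 3 * 5 * 11 by norm_num] at h
  simpa only [hq.dvd_mul, Nat.prime_dvd_prime_iff_eq hq Nat.prime_two,
    Nat.prime_dvd_prime_iff_eq hq Nat.prime_three, Nat.prime_dvd_prime_iff_eq hq Nat.prime_five,
    Nat.prime_dvd_prime_iff_eq hq (by norm_num : Nat.Prime 11), or_assoc] using h

theorem toda_of_bernoulli_330 (m : ℕ) (hm : 0 < m)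
    (h : (bernoulli (20 * m)).den = 330) : TodaSet (5 * m) = {3, 11} := by
  have hden {q : ℕ} (hq : q.Prime) (hqm : q - 1 ∣ 4 * (5 * m)) : q ∣ 330 := by
    rw [← h, show 20 * m = 2 * (10 * m) by ring]
    exact prime_dvd_den_bernoulli hq (by omega) (by rwa [show 2 * (10 * m) = 4 * (5 * m) by ring])
  have h3 : ¬ 3 ∣ m := fun ⟨k, hk⟩ => by
    simpa using hden (q := 7) (by norm_num) ⟨10 * k, by rw [hk]; ring⟩
  have h11 : ¬ 11 ∣ m := fun ⟨k, hk⟩ => by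
    simpa using hden (q := 23) (by norm_num) ⟨10 * k, by rw [hk]; ring⟩
  ext q
  simp only [TodaSet, Set.mem_ofPred_eq, Set.mem_insert_iff, Set.mem_singleton_iff]
  refine ⟨fun hq => ?_, ?_⟩
  · obtain ⟨hprime, hodd, hqm, -⟩ := id hq
    rcases eq_of_prime_dvd_330 hprime (hden hprime hqm) with rfl | rfl | rfl | rfl
    · exact absurd hodd (by decide)
    · exact .inl rfl
    · exact absurd (dvd_mul_right 5 m) ((isTodaPrime_five_iff _).1 hq)
    · exact .inr rfl
  · rintro (rfl | rfl)
    · rwa [isTodaPrime_three_iff, Nat.Coprime.dvd_mul_left (by norm_num)]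
    · rwa [isTodaPrime_eleven_five_mul_iff]
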